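/- Let D ⊆ ℂⁿ be a domain, p₀ ∈ ∂D, a ∈ D a fixed point. Suppose there are points z_j ∈ D with z_j → p₀, radii r_j > 0, and injective holomorphic maps f_j : 𝔹ₙ → D with B^k_D(z_j, r_j) ⊆ f_j(𝔹ₙ), and suppose (1 − tanh r_j)/δ_D(z_j) → 0, where δ_D(z) = dist(z, ∂D). If moreover there exists a constant c > 0 with 2 k_D(a, z_j) ≤ −log δ_D(z_j) + c for all j, then h^k_D(a) = 1. -/

import Mathlib

open Set Metric

noncomputable section

/-- The inverse hyperbolic tangent. -/
def artanh (x : ℝ) : ℝ := (1 / 2) * Real.log ((1 + x) / (1 - x))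

variable {n : ℕ}

/-- `ℂⁿ` as a complex Euclidean space. -/
abbrev Cn (n : ℕ) := EuclideanSpace ℂ (Fin n)

/-- The Lempert function of `D ⊆ ℂⁿ` (with values in `[0,∞]`):
`l_D(z,w) = inf { tanh⁻¹|λ| : φ : Δ → D holomorphic, φ(0) = z, φ(λ) = w }`. -/
def lempert (D : Set (Cn n)) (z w : Cn n) : ENNReal :=
  sInf {x : ENNReal | ∃ φ : ℂ → Cn n, DifferentiableOn ℂ φ (ball 0 1) ∧
    MapsTo φ (ball 0 1) D ∧ φ 0 = z ∧
    ∃ l : ℂ, l ∈ ball (0 : ℂ) 1 ∧ φ l = w ∧ x = ENNReal.ofReal (artanh ‖l‖)}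

/-- The Carathéodory pseudodistance of `D ⊆ ℂⁿ`:
`c_D(z,w) = sup { tanh⁻¹|f(w)| : f : D → Δ holomorphic, f(z) = 0 }`. -/
def cara (D : Set (Cn n)) (z w : Cn n) : ℝ :=
  sSup {x : ℝ | ∃ f : Cn n → ℂ, DifferentiableOn ℂ f D ∧ MapsTo f D (ball 0 1) ∧
    f z = 0 ∧ x = artanh ‖f w‖}

/-- The squeezing function of `D ⊆ ℂⁿ`:
`s_D(z) = sup { r : ∃ injective holomorphic f : D → 𝔹ₙ, f(z) = 0, r𝔹ₙ ⊆ f(D) }`,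
with value `0` if no such map exists. -/
def squeeze (D : Set (Cn n)) (z : Cn n) : ℝ :=
  sSup (insert (0 : ℝ) {r : ℝ | 0 < r ∧ ∃ f : Cn n → Cn n, DifferentiableOn ℂ f D ∧
    InjOn f D ∧ MapsTo f D (ball 0 1) ∧ f z = 0 ∧ ball (0 : Cn n) r ⊆ f '' D})

/-- The Fridman invariant of `D ⊆ ℂⁿ` with respect to a pseudodistance `d`:
`h^d_D(z) = sup { tanh r : B^d_D(z,r) ⊆ g(𝔹ₙ), g : 𝔹ₙ → D injective holomorphic }`. -/
def fridman (d : Cn n → Cn n → ℝ) (D : Set (Cn n)) (z : Cn n) : ℝ :=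
  sSup (insert (0 : ℝ) {x : ℝ | ∃ r : ℝ, 0 ≤ r ∧ x = Real.tanh r ∧
    ∃ g : Cn n → Cn n, DifferentiableOn ℂ g (ball 0 1) ∧ InjOn g (ball 0 1) ∧
      MapsTo g (ball 0 1) D ∧ {w ∈ D | d z w < r} ⊆ g '' ball 0 1})

/-- The Kobayashi–Royden pseudometric of `D ⊆ ℂⁿ`:
`κ_D(z;X) = inf { |λ| : φ : Δ → D holomorphic, φ(0) = z, λ φ'(0) = X }`. -/
def kappaRoyden (D : Set (Cn n)) (z X : Cn n) : ℝ :=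
  sInf {x : ℝ | ∃ φ : ℂ → Cn n, DifferentiableOn ℂ φ (ball 0 1) ∧
    MapsTo φ (ball 0 1) D ∧ φ 0 = z ∧ ∃ l : ℂ, l • fderiv ℂ φ 0 1 = X ∧ x = ‖l‖}

/-- The Kobayashi length of a curve `γ : [0,1] → D` in `D`. -/
def kobLength (D : Set (Cn n)) (γ : ℝ → Cn n) : ℝ :=
  ∫ t in (0:ℝ)..1, kappaRoyden D (γ t) (deriv γ t)

/-- `γ` is a `C¹` curve in `D` from `z` to `w`. -/
def IsCurve (D : Set (Cn n)) (γ : ℝ → Cn n) (z w : Cn n) : Prop :=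
  ContDiffOn ℝ 1 γ (Icc 0 1) ∧ MapsTo γ (Icc 0 1) D ∧ γ 0 = z ∧ γ 1 = w

/-- The Kobayashi pseudodistance of `D ⊆ ℂⁿ`, i.e. the integrated form of the
Kobayashi–Royden pseudometric. -/
def kobayashi (D : Set (Cn n)) (z w : Cn n) : ℝ :=
  sInf {L : ℝ | ∃ γ : ℝ → Cn n, IsCurve D γ z w ∧ kobLength D γ = L}


/-! ### Auxiliary lemmas -/

section Aux
open Pointwise

variable {D : Set (Cn n)} {z w v : Cn n}

lemma kappa_nonneg (D : Set (Cn n)) (z X : Cn n) : 0 ≤ kappaRoyden D z X := by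
  apply Real.sInf_nonneg
  rintro x ⟨φ, -, -, -, l, -, rfl⟩
  exact norm_nonneg l

lemma kappa_zero (hz : z ∈ D) : kappaRoyden D z 0 = 0 := by
  refine le_antisymm (csInf_le ⟨0, ?_⟩ ?_) (kappa_nonneg D z 0)
  · rintro x ⟨φ, -, -, -, l, -, rfl⟩; exact norm_nonneg l
  · refine ⟨fun _ => z, differentiableOn_const z, fun x _ => hz, rfl, 0, by simp, by simp⟩

lemma kappa_neg (D : Set (Cn n)) (z X : Cn n) :
    kappaRoyden D z (-X) = kappaRoyden D z X := by
  unfold kappaRoyden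
  congr 1
  ext x
  constructor
  · rintro ⟨φ, h1, h2, h3, l, hl, rfl⟩
    exact ⟨φ, h1, h2, h3, -l, by rw [neg_smul, hl, neg_neg], (norm_neg l).symm⟩
  · rintro ⟨φ, h1, h2, h3, l, hl, rfl⟩
    exact ⟨φ, h1, h2, h3, -l, by rw [neg_smul, hl], (norm_neg l).symm⟩

lemma kappa_smul (hz : z ∈ D) {c : ℝ} (hc : 0 ≤ c) (X : Cn n) :
    kappaRoyden D z (c • X) = c * kappaRoyden D z X := by
  rcases eq_or_lt_of_le hc with rfl | hc
  · simp [kappa_zero hz]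
  have hset : {x : ℝ | ∃ φ : ℂ → Cn n, DifferentiableOn ℂ φ (ball 0 1) ∧
      MapsTo φ (ball 0 1) D ∧ φ 0 = z ∧ ∃ l : ℂ, l • fderiv ℂ φ 0 1 = c • X ∧ x = ‖l‖}
      = c • {x : ℝ | ∃ φ : ℂ → Cn n, DifferentiableOn ℂ φ (ball 0 1) ∧
      MapsTo φ (ball 0 1) D ∧ φ 0 = z ∧ ∃ l : ℂ, l • fderiv ℂ φ 0 1 = X ∧ x = ‖l‖} := by
    have hcC : ((c : ℂ)) ≠ 0 := by exact_mod_cast hc.ne'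
    ext x
    simp only [Set.mem_smul_set, mem_setOf_eq]
    constructor
    · rintro ⟨φ, h1, h2, h3, l, hl, rfl⟩
      refine ⟨‖(c : ℂ)⁻¹ * l‖, ⟨φ, h1, h2, h3, (c : ℂ)⁻¹ * l, ?_, rfl⟩, ?_⟩
      · rw [mul_smul, hl, ← Complex.coe_smul, smul_smul, inv_mul_cancel₀ hcC, one_smul]
      · rw [norm_mul, norm_inv, Complex.norm_real, Real.norm_eq_abs,
          abs_of_pos hc, smul_eq_mul]
        field_simp
    · rintro ⟨y, ⟨φ, h1, h2, h3, l, hl, rfl⟩, rfl⟩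
      refine ⟨φ, h1, h2, h3, (c : ℂ) * l, ?_, ?_⟩
      · rw [mul_smul, hl, Complex.coe_smul]
      · rw [norm_mul, Complex.norm_real, Real.norm_eq_abs, abs_of_pos hc, smul_eq_mul]
  rw [kappaRoyden, hset, Real.sInf_smul_of_nonneg hc.le, smul_eq_mul, kappaRoyden]

lemma kobLength_nonneg (D : Set (Cn n)) (γ : ℝ → Cn n) : 0 ≤ kobLength D γ :=
  intervalIntegral.integral_nonneg zero_le_one fun u _ => kappa_nonneg D (γ u) (deriv γ u)

lemma kobayashi_bddBelow (D : Set (Cn n)) (z w : Cn n) :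
    BddBelow {L : ℝ | ∃ γ : ℝ → Cn n, IsCurve D γ z w ∧ kobLength D γ = L} := by
  refine ⟨0, ?_⟩
  rintro L ⟨γ, -, rfl⟩
  exact kobLength_nonneg D γ

lemma kobayashi_nonneg (D : Set (Cn n)) (z w : Cn n) : 0 ≤ kobayashi D z w := by
  apply Real.sInf_nonneg
  rintro L ⟨γ, -, rfl⟩
  exact kobLength_nonneg D γ

lemma kobayashi_le_kobLength {γ : ℝ → Cn n} (hγ : IsCurve D γ z w) :
    kobayashi D z w ≤ kobLength D γ :=
  csInf_le (kobayashi_bddBelow D z w) ⟨γ, hγ, rfl⟩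

lemma isCurve_const (hz : z ∈ D) : IsCurve D (fun _ => z) z z :=
  ⟨contDiffOn_const, fun _ _ => hz, rfl, rfl⟩

lemma isCurve_segment {ε : ℝ} (hsub : ball z ε ⊆ D) (hw : w ∈ ball z ε) :
    IsCurve D (fun t => z + t • (w - z)) z w := by
  refine ⟨(contDiff_const.add (contDiff_id.smul contDiff_const)).contDiffOn,
    fun t ht => hsub ?_, by simp, by simp⟩
  rw [mem_ball, dist_eq_norm]
  have h1 : z + t • (w - z) - z = t • (w - z) := by abel
  rw [h1, norm_smul, Real.norm_eq_abs, abs_of_nonneg ht.1]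
  calc t * ‖w - z‖ ≤ 1 * ‖w - z‖ :=
        mul_le_mul_of_nonneg_right ht.2 (norm_nonneg _)
    _ = dist w z := by rw [one_mul, dist_eq_norm]
    _ < ε := mem_ball.mp hw

lemma intervalIntegral_congr_Ioo {f g : ℝ → ℝ} {a b : ℝ} (hab : a ≤ b)
    (h : ∀ t ∈ Ioo a b, f t = g t) : ∫ t in a..b, f t = ∫ t in a..b, g t := by
  rw [intervalIntegral.integral_of_le hab, MeasureTheory.integral_Ioc_eq_integral_Ioo,
    intervalIntegral.integral_of_le hab, MeasureTheory.integral_Ioc_eq_integral_Ioo]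
  exact MeasureTheory.setIntegral_congr_fun measurableSet_Ioo h

end Aux
section Sig

/-- Smooth step function used to reparametrize curves. -/
def sig (t : ℝ) : ℝ := t ^ 2 * (3 - 2 * t)

/-- Derivative of `sig`. -/
def sig' (t : ℝ) : ℝ := 6 * t - 6 * t ^ 2

lemma sig_zero : sig 0 = 0 := by simp [sig]
lemma sig_one : sig 1 = 1 := by norm_num [sig]
lemma sig'_zero : sig' 0 = 0 := by simp [sig']
lemma sig'_one : sig' 1 = 0 := by norm_num [sig']

lemma sig_hasDerivAt (t : ℝ) : HasDerivAt sig (sig' t) t := by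
  have h : HasDerivAt (fun t : ℝ => t ^ 2 * (3 - 2 * t))
      ((2 * t ^ 1) * (3 - 2 * t) + t ^ 2 * (0 - 2 * 1)) t :=
    (hasDerivAt_pow 2 t).mul ((hasDerivAt_const t 3).sub ((hasDerivAt_id t).const_mul 2))
  convert h using 1
  case e'_8 => rfl
  simp [sig']; ring

lemma sig_continuous : Continuous sig := by unfold sig; fun_prop
lemma sig'_continuous : Continuous sig' := by unfold sig'; fun_prop

lemma sig_mapsTo : MapsTo sig (Icc (0:ℝ) 1) (Icc (0:ℝ) 1) := by
  intro t ht
  obtain ⟨h0, h1⟩ := ht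
  simp only [sig]
  constructor
  · nlinarith
  · nlinarith [sq_nonneg (1 - t)]

lemma sig'_pos {t : ℝ} (ht : t ∈ Ioo (0:ℝ) 1) : 0 < sig' t := by
  obtain ⟨h0, h1⟩ := ht
  have : sig' t = 6 * t * (1 - t) := by unfold sig'; ring
  rw [this]; nlinarith

lemma sig'_nonneg {t : ℝ} (ht : t ∈ Icc (0:ℝ) 1) : 0 ≤ sig' t := by
  obtain ⟨h0, h1⟩ := ht
  have : sig' t = 6 * t * (1 - t) := by unfold sig'; ring
  rw [this]; nlinarith

lemma sig_strictMonoOn : StrictMonoOn sig (Icc (0:ℝ) 1) := by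
  apply strictMonoOn_of_deriv_pos (convex_Icc 0 1) sig_continuous.continuousOn
  intro t ht
  rw [interior_Icc] at ht
  rw [(sig_hasDerivAt t).deriv]
  exact sig'_pos ht

lemma sig_injOn : InjOn sig (Ioo (0:ℝ) 1) :=
  (sig_strictMonoOn.mono Ioo_subset_Icc_self).injOn

lemma sig_image : sig '' Ioo (0:ℝ) 1 = Ioo (0:ℝ) 1 := by
  apply Subset.antisymm
  · rintro y ⟨t, ht, rfl⟩
    constructor
    · have := sig_strictMonoOn (left_mem_Icc.mpr zero_le_one) (Ioo_subset_Icc_self ht) ht.1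
      rwa [sig_zero] at this
    · have := sig_strictMonoOn (Ioo_subset_Icc_self ht) (right_mem_Icc.mpr zero_le_one) ht.2
      rwa [sig_one] at this
  · have := intermediate_value_Ioo zero_le_one sig_continuous.continuousOn
    rwa [sig_zero, sig_one] at this

end Sig

section Curves

variable {D : Set (Cn n)} {z w v : Cn n}

lemma deriv_eq_derivWithin_of_mem_Ioo {γ : ℝ → Cn n} (hγ : ContDiffOn ℝ 1 γ (Icc 0 1))
    {t : ℝ} (ht : t ∈ Ioo (0:ℝ) 1) :
    deriv γ t = derivWithin γ (Icc 0 1) t := by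
  have hd : HasDerivWithinAt γ (derivWithin γ (Icc 0 1) t) (Icc 0 1) t :=
    ((hγ.differentiableOn one_ne_zero) t (Ioo_subset_Icc_self ht)).hasDerivWithinAt
  exact (hd.hasDerivAt (Icc_mem_nhds ht.1 ht.2)).deriv

/-- Reversal of a curve, preserving Kobayashi length. -/
lemma exists_reverse {γ : ℝ → Cn n} (hγ : IsCurve D γ z w) :
    ∃ η : ℝ → Cn n, IsCurve D η w z ∧ kobLength D η = kobLength D γ := by
  obtain ⟨hsm, hmap, h0, h1⟩ := hγ
  refine ⟨fun t => γ (1 - t), ⟨?_, ?_, by simpa, by simpa⟩, ?_⟩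
  · exact hsm.comp (contDiff_const.sub contDiff_id).contDiffOn
      (fun t ht => ⟨by linarith [ht.2], by linarith [ht.1]⟩)
  · intro t ht
    exact hmap ⟨by linarith [ht.2], by linarith [ht.1]⟩
  · have key : ∀ t ∈ Ioo (0:ℝ) 1,
        kappaRoyden D (γ (1 - t)) (deriv (fun s => γ (1 - s)) t)
          = kappaRoyden D (γ (1 - t)) (deriv γ (1 - t)) := by
      intro t ht
      have hmem : (1 - t) ∈ Ioo (0:ℝ) 1 := ⟨by linarith [ht.2], by linarith [ht.1]⟩
      have hd : DifferentiableAt ℝ γ (1 - t) :=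
        ((hsm.differentiableOn one_ne_zero) _ (Ioo_subset_Icc_self hmem)).differentiableAt (Icc_mem_nhds hmem.1 hmem.2)
      have h2 : HasDerivAt (fun s => γ (1 - s)) ((-1 : ℝ) • deriv γ (1 - t)) t := by
        exact HasDerivAt.scomp t hd.hasDerivAt ((hasDerivAt_id t).const_sub 1)
      rw [h2.deriv]
      have : (-1 : ℝ) • deriv γ (1 - t) = -(deriv γ (1 - t)) := by simp
      rw [this, kappa_neg]
    unfold kobLength
    rw [intervalIntegral_congr_Ioo zero_le_one
      (f := fun t => kappaRoyden D (γ (1 - t)) (deriv (fun s => γ (1 - s)) t))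
      (g := fun t => kappaRoyden D (γ (1 - t)) (deriv γ (1 - t))) key]
    have := intervalIntegral.integral_comp_sub_left
      (a := 0) (b := 1) (fun u => kappaRoyden D (γ u) (deriv γ u)) 1
    simpa using this

end Curves
section Concat

variable {D : Set (Cn n)} {z w v : Cn n}

lemma exists_concat {γ1 γ2 : ℝ → Cn n} (hγ1 : IsCurve D γ1 z v) (hγ2 : IsCurve D γ2 v w) :
    ∃ γ : ℝ → Cn n, IsCurve D γ z w ∧
      kobLength D γ ≤ kobLength D γ1 + kobLength D γ2 := by
  obtain ⟨hs1, hm1, h10, h11⟩ := hγ1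
  obtain ⟨hs2, hm2, h20, h21⟩ := hγ2
  have uI : UniqueDiffOn ℝ (Icc (0:ℝ) 1) := uniqueDiffOn_Icc one_pos
  set d1 := derivWithin γ1 (Icc (0:ℝ) 1) with hd1
  set d2 := derivWithin γ2 (Icc (0:ℝ) 1) with hd2
  set γ : ℝ → Cn n :=
    fun t => if t ≤ 1/2 then γ1 (sig (2*t)) else γ2 (sig (2*t - 1)) with hγdef
  set G : ℝ → Cn n := fun t => if t ≤ 1/2 then (2 * sig' (2*t)) • d1 (sig (2*t))
      else (2 * sig' (2*t - 1)) • d2 (sig (2*t - 1)) with hGdef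
  -- the two halves
  have hEq1 : EqOn γ (fun t => γ1 (sig (2*t))) (Icc (0:ℝ) (1/2)) := fun t ht => if_pos ht.2
  have hEq2 : EqOn γ (fun t => γ2 (sig (2*t - 1))) (Icc (1/2:ℝ) 1) := by
    intro t ht
    by_cases h : t ≤ 1/2
    · have hte : t = 1/2 := le_antisymm h ht.1
      subst hte
      simp only [hγdef]
      rw [if_pos le_rfl]
      norm_num [sig_one, sig_zero, h11, h20]
    · simp only [hγdef]; rw [if_neg h]
  have maps1 : MapsTo (fun t => sig (2*t)) (Icc (0:ℝ) (1/2)) (Icc (0:ℝ) 1) :=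
    fun t ht => sig_mapsTo ⟨by linarith [ht.1], by linarith [ht.2]⟩
  have maps2 : MapsTo (fun t => sig (2*t - 1)) (Icc (1/2:ℝ) 1) (Icc (0:ℝ) 1) :=
    fun t ht => sig_mapsTo ⟨by linarith [ht.1], by linarith [ht.2]⟩
  -- derivatives on the two halves
  have hD1 : ∀ t ∈ Icc (0:ℝ) (1/2),
      HasDerivWithinAt γ ((2 * sig' (2*t)) • d1 (sig (2*t))) (Icc (0:ℝ) (1/2)) t := by
    intro t ht
    have houter : HasDerivWithinAt γ1 (d1 (sig (2*t))) (Icc (0:ℝ) 1) (sig (2*t)) :=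
      ((hs1.differentiableOn one_ne_zero) _ (maps1 ht)).hasDerivWithinAt
    have hinner : HasDerivWithinAt (fun s => sig (2*s)) (2 * sig' (2*t)) (Icc (0:ℝ) (1/2)) t := by
      have h := HasDerivAt.comp t (sig_hasDerivAt (2*t)) ((hasDerivAt_id t).const_mul 2)
      have h' : HasDerivAt (fun s => sig (2*s)) (2 * sig' (2*t)) t := by
        convert h using 1
        · rfl
        · rfl
        · rfl
        ring
      exact h'.hasDerivWithinAt
    have hcomp := HasDerivWithinAt.scomp t houter hinner maps1
    exact hcomp.congr hEq1 (hEq1 ht)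
  have hD2 : ∀ t ∈ Icc (1/2:ℝ) 1,
      HasDerivWithinAt γ ((2 * sig' (2*t - 1)) • d2 (sig (2*t - 1))) (Icc (1/2:ℝ) 1) t := by
    intro t ht
    have houter : HasDerivWithinAt γ2 (d2 (sig (2*t - 1))) (Icc (0:ℝ) 1) (sig (2*t - 1)) :=
      ((hs2.differentiableOn one_ne_zero) _ (maps2 ht)).hasDerivWithinAt
    have hinner : HasDerivWithinAt (fun s => sig (2*s - 1)) (2 * sig' (2*t - 1))
        (Icc (1/2:ℝ) 1) t := by
      have h := HasDerivAt.comp t (sig_hasDerivAt (2*t - 1))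
        (((hasDerivAt_id t).const_mul 2).sub_const 1)
      have h' : HasDerivAt (fun s => sig (2*s - 1)) (2 * sig' (2*t - 1)) t := by
        convert h using 1
        · rfl
        · rfl
        · rfl
        ring
      exact h'.hasDerivWithinAt
    have hcomp := HasDerivWithinAt.scomp t houter hinner maps2
    exact hcomp.congr hEq2 (hEq2 ht)
  have hG0 : G (1/2 : ℝ) = 0 := by
    simp only [hGdef]
    rw [if_pos le_rfl]
    norm_num [sig'_one]
  -- global derivative
  have hGI : ∀ t ∈ Icc (0:ℝ) 1, HasDerivWithinAt γ (G t) (Icc (0:ℝ) 1) t := by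
    intro t ht
    rcases lt_trichotomy t (1/2) with hlt | heq | hgt
    · have h1 := hD1 t ⟨ht.1, hlt.le⟩
      have hmem : Icc (0:ℝ) (1/2) ∈ nhdsWithin t (Icc (0:ℝ) 1) :=
        mem_nhdsWithin.mpr ⟨Iio (1/2), isOpen_Iio, hlt, fun x hx => ⟨hx.2.1, hx.1.le⟩⟩
      have h2 := h1.mono_of_mem_nhdsWithin hmem
      have hGt : G t = (2 * sig' (2*t)) • d1 (sig (2*t)) := if_pos hlt.le
      rw [hGt]; exact h2
    · have h1 := hD1 (1/2) ⟨by norm_num, le_rfl⟩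
      have h2 := hD2 (1/2) ⟨le_rfl, by norm_num⟩
      have e1 : (2 * sig' (2*(1/2:ℝ))) • d1 (sig (2*(1/2:ℝ))) = 0 := by
        norm_num [sig'_one]
      have e2 : (2 * sig' (2*(1/2:ℝ) - 1)) • d2 (sig (2*(1/2:ℝ) - 1)) = 0 := by
        norm_num [sig'_zero]
      rw [e1] at h1
      rw [e2] at h2
      have hu := h1.union h2
      rw [Icc_union_Icc_eq_Icc (by norm_num) (by norm_num)] at hu
      rw [heq, hG0]
      exact hu
    · have h1 := hD2 t ⟨hgt.le, ht.2⟩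
      have hmem : Icc (1/2:ℝ) 1 ∈ nhdsWithin t (Icc (0:ℝ) 1) :=
        mem_nhdsWithin.mpr ⟨Ioi (1/2), isOpen_Ioi, hgt, fun x hx => ⟨hx.1.le, hx.2.2⟩⟩
      have h2 := h1.mono_of_mem_nhdsWithin hmem
      have hGt : G t = (2 * sig' (2*t - 1)) • d2 (sig (2*t - 1)) := if_neg (not_le.mpr hgt)
      rw [hGt]; exact h2
  have hdiff : DifferentiableOn ℝ γ (Icc (0:ℝ) 1) :=
    fun t ht => (hGI t ht).differentiableWithinAt
  have hdw : EqOn (derivWithin γ (Icc (0:ℝ) 1)) G (Icc (0:ℝ) 1) :=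
    fun t ht => (hGI t ht).derivWithin (uI t ht)
  -- continuity of G
  have hd1c : ContinuousOn d1 (Icc (0:ℝ) 1) := by
    have h := ((contDiffOn_succ_iff_derivWithin uI (n := 0)).mp (by simpa using hs1)).2.2
    exact contDiffOn_zero.mp h
  have hd2c : ContinuousOn d2 (Icc (0:ℝ) 1) := by
    have h := ((contDiffOn_succ_iff_derivWithin uI (n := 0)).mp (by simpa using hs2)).2.2
    exact contDiffOn_zero.mp h
  have c1 : ContinuousOn (fun t => (2 * sig' (2*t)) • d1 (sig (2*t))) (Icc (0:ℝ) (1/2)) := by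
    refine ContinuousOn.smul (f := fun t => 2 * sig' (2*t)) (g := fun t => d1 (sig (2*t))) ?_ ?_
    · exact (continuous_const.mul (sig'_continuous.comp
        (continuous_const.mul continuous_id))).continuousOn
    · exact hd1c.comp ((sig_continuous.comp
        (continuous_const.mul continuous_id)).continuousOn) maps1
  have c2 : ContinuousOn (fun t => (2 * sig' (2*t - 1)) • d2 (sig (2*t - 1)))
      (Icc (1/2:ℝ) 1) := by
    refine ContinuousOn.smul (f := fun t => 2 * sig' (2*t - 1)) (g := fun t => d2 (sig (2*t - 1))) ?_ ?_
    · exact (continuous_const.mul (sig'_continuous.comp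
        ((continuous_const.mul continuous_id).sub continuous_const))).continuousOn
    · exact hd2c.comp ((sig_continuous.comp
        ((continuous_const.mul continuous_id).sub continuous_const)).continuousOn) maps2
  have cG1 : ContinuousOn G (Icc (0:ℝ) (1/2)) :=
    c1.congr (fun t ht => if_pos ht.2)
  have cG2 : ContinuousOn G (Icc (1/2:ℝ) 1) := by
    apply c2.congr
    intro t ht
    by_cases h : t ≤ 1/2
    · have hte : t = 1/2 := le_antisymm h ht.1
      subst hte
      rw [hG0]
      norm_num [sig'_zero]
    · exact if_neg h
  have hGc : ContinuousOn G (Icc (0:ℝ) 1) := by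
    rw [← Icc_union_Icc_eq_Icc (by norm_num : (0:ℝ) ≤ 1/2) (by norm_num : (1/2:ℝ) ≤ 1)]
    intro t _
    apply ContinuousWithinAt.union
    · by_cases h : t ∈ Icc (0:ℝ) (1/2)
      · exact cG1 t h
      · exact continuousWithinAt_of_notMem_closure (by rwa [isClosed_Icc.closure_eq])
    · by_cases h : t ∈ Icc (1/2:ℝ) 1
      · exact cG2 t h
      · exact continuousWithinAt_of_notMem_closure (by rwa [isClosed_Icc.closure_eq])
  have hsmooth : ContDiffOn ℝ 1 γ (Icc (0:ℝ) 1) := by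
    rw [← zero_add (1 : WithTop ℕ∞)]
    refine (contDiffOn_succ_iff_derivWithin uI).mpr ⟨hdiff, by simp, ?_⟩
    rw [contDiffOn_zero]
    exact hGc.congr hdw
  have hcurve : IsCurve D γ z w := by
    refine ⟨hsmooth, ?_, ?_, ?_⟩
    · intro t ht
      simp only [hγdef]
      split_ifs with h
      · exact hm1 (sig_mapsTo ⟨by linarith [ht.1], by linarith⟩)
      · exact hm2 (sig_mapsTo ⟨by linarith [not_le.mp h], by linarith [ht.2]⟩)
    · simp only [hγdef]
      rw [if_pos (by norm_num : (0:ℝ) ≤ 1/2)]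
      norm_num [sig_zero, h10]
    · simp only [hγdef]
      rw [if_neg (by norm_num : ¬ (1:ℝ) ≤ 1/2)]
      norm_num [sig_one, h21]
  -- the length estimate
  set F : ℝ → ℝ := fun t => kappaRoyden D (γ t) (deriv γ t) with hF
  set q1 : ℝ → ℝ := fun u => kappaRoyden D (γ1 u) (d1 u) with hq1def
  set q2 : ℝ → ℝ := fun u => kappaRoyden D (γ2 u) (d2 u) with hq2def
  have hkobγ : kobLength D γ = ∫ t in (0:ℝ)..1, F t := rfl
  have keyd : ∀ t ∈ Ioo (0:ℝ) 1, deriv γ t = G t :=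
    fun t ht => ((hGI t (Ioo_subset_Icc_self ht)).hasDerivAt (Icc_mem_nhds ht.1 ht.2)).deriv
  have key1 : ∀ t ∈ Ioo (0:ℝ) (1/2), F t = 2 * ((fun u => sig' u * q1 (sig u)) (2*t)) := by
    intro t ht
    have ht' : t ∈ Ioo (0:ℝ) 1 := ⟨ht.1, by linarith [ht.2]⟩
    have h2t : (2*t) ∈ Icc (0:ℝ) 1 := ⟨by linarith [ht.1], by linarith [ht.2]⟩
    have hγt : γ t = γ1 (sig (2*t)) := hEq1 ⟨ht.1.le, ht.2.le⟩
    have hGt : G t = (2 * sig' (2*t)) • d1 (sig (2*t)) := if_pos ht.2.le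
    have hmemD : γ1 (sig (2*t)) ∈ D := hm1 (sig_mapsTo h2t)
    have hc : (0:ℝ) ≤ 2 * sig' (2*t) := mul_nonneg (by norm_num) (sig'_nonneg h2t)
    simp only [hF]
    rw [keyd t ht', hGt, hγt, kappa_smul hmemD hc]
    simp only [hq1def]
    ring
  have key2 : ∀ t ∈ Ioo (1/2:ℝ) 1,
      F t = 2 * ((fun u => sig' u * q2 (sig u)) (2*t - 1)) := by
    intro t ht
    have ht' : t ∈ Ioo (0:ℝ) 1 := ⟨by linarith [ht.1], ht.2⟩
    have h2t : (2*t - 1) ∈ Icc (0:ℝ) 1 := ⟨by linarith [ht.1], by linarith [ht.2]⟩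
    have hγt : γ t = γ2 (sig (2*t - 1)) := hEq2 ⟨ht.1.le, ht.2.le⟩
    have hGt : G t = (2 * sig' (2*t - 1)) • d2 (sig (2*t - 1)) := if_neg (not_le.mpr ht.1)
    have hmemD : γ2 (sig (2*t - 1)) ∈ D := hm2 (sig_mapsTo h2t)
    have hc : (0:ℝ) ≤ 2 * sig' (2*t - 1) := mul_nonneg (by norm_num) (sig'_nonneg h2t)
    simp only [hF]
    rw [keyd t ht', hGt, hγt, kappa_smul hmemD hc]
    simp only [hq2def]
    ring
  have hsub1 : ∫ u in (0:ℝ)..1, sig' u * q1 (sig u) = kobLength D γ1 := by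
    have himg := MeasureTheory.integral_image_eq_integral_abs_deriv_smul measurableSet_Ioo
        (fun x _ => (sig_hasDerivAt x).hasDerivWithinAt) sig_injOn q1
    rw [sig_image] at himg
    have e1 : ∫ u in (0:ℝ)..1, sig' u * q1 (sig u) = ∫ u in (0:ℝ)..1, q1 u := by
      rw [intervalIntegral.integral_of_le zero_le_one,
        MeasureTheory.integral_Ioc_eq_integral_Ioo,
        intervalIntegral.integral_of_le zero_le_one,
        MeasureTheory.integral_Ioc_eq_integral_Ioo, himg]
      apply MeasureTheory.setIntegral_congr_fun measurableSet_Ioo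
      intro s hs
      simp only [smul_eq_mul, abs_of_pos (sig'_pos hs)]
    rw [e1]
    apply intervalIntegral_congr_Ioo zero_le_one
    intro t ht
    simp only [hq1def]
    rw [deriv_eq_derivWithin_of_mem_Ioo hs1 ht]
  have hsub2 : ∫ u in (0:ℝ)..1, sig' u * q2 (sig u) = kobLength D γ2 := by
    have himg := MeasureTheory.integral_image_eq_integral_abs_deriv_smul measurableSet_Ioo
        (fun x _ => (sig_hasDerivAt x).hasDerivWithinAt) sig_injOn q2
    rw [sig_image] at himg
    have e1 : ∫ u in (0:ℝ)..1, sig' u * q2 (sig u) = ∫ u in (0:ℝ)..1, q2 u := by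
      rw [intervalIntegral.integral_of_le zero_le_one,
        MeasureTheory.integral_Ioc_eq_integral_Ioo,
        intervalIntegral.integral_of_le zero_le_one,
        MeasureTheory.integral_Ioc_eq_integral_Ioo, himg]
      apply MeasureTheory.setIntegral_congr_fun measurableSet_Ioo
      intro s hs
      simp only [smul_eq_mul, abs_of_pos (sig'_pos hs)]
    rw [e1]
    apply intervalIntegral_congr_Ioo zero_le_one
    intro t ht
    simp only [hq2def]
    rw [deriv_eq_derivWithin_of_mem_Ioo hs2 ht]
  have hsum1 : ∫ t in (0:ℝ)..(1/2), F t = kobLength D γ1 := by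
    rw [intervalIntegral_congr_Ioo (by norm_num) key1,
      intervalIntegral.integral_const_mul]
    have h := intervalIntegral.smul_integral_comp_mul_left (a := 0) (b := 1/2)
      (fun u => sig' u * q1 (sig u)) 2
    rw [smul_eq_mul] at h
    norm_num at h ⊢
    rw [h]
    exact hsub1.symm ▸ hsub1
  have hsum2 : ∫ t in (1/2:ℝ)..1, F t = kobLength D γ2 := by
    rw [intervalIntegral_congr_Ioo (by norm_num) key2,
      intervalIntegral.integral_const_mul]
    have h := intervalIntegral.smul_integral_comp_mul_sub (a := 1/2) (b := 1)
      (fun u => sig' u * q2 (sig u)) 2 1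
    rw [smul_eq_mul] at h
    norm_num at h ⊢
    rw [h]
    exact hsub2.symm ▸ hsub2
  refine ⟨γ, hcurve, ?_⟩
  by_cases hint : IntervalIntegrable F MeasureTheory.volume 0 1
  · have hi1 : IntervalIntegrable F MeasureTheory.volume 0 (1/2) := by
      apply hint.mono_set
      rw [uIcc_of_le (by norm_num : (0:ℝ) ≤ 1/2), uIcc_of_le zero_le_one]
      exact Icc_subset_Icc le_rfl (by norm_num)
    have hi2 : IntervalIntegrable F MeasureTheory.volume (1/2) 1 := by
      apply hint.mono_set
      rw [uIcc_of_le (by norm_num : (1/2:ℝ) ≤ 1), uIcc_of_le zero_le_one]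
      exact Icc_subset_Icc (by norm_num) le_rfl
    have hsplit := intervalIntegral.integral_add_adjacent_intervals hi1 hi2
    rw [hkobγ, ← hsplit, hsum1, hsum2]
  · rw [hkobγ, intervalIntegral.integral_undef hint]
    exact add_nonneg (kobLength_nonneg D γ1) (kobLength_nonneg D γ2)

end Concat
section Triangle

variable {D : Set (Cn n)} {z w v : Cn n}

/-- In an open connected set, any two points are joined by a `C¹` curve. -/
lemma exists_isCurve (hD : IsOpen D) (hconn : IsPreconnected D) (hz : z ∈ D) (hw : w ∈ D) :
    ∃ γ : ℝ → Cn n, IsCurve D γ z w := by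
  by_contra hcon
  set U : Set (Cn n) := {b | b ∈ D ∧ ∃ γ : ℝ → Cn n, IsCurve D γ z b} with hU
  set V : Set (Cn n) := {b | b ∈ D ∧ ¬ ∃ γ : ℝ → Cn n, IsCurve D γ z b} with hV
  have hUopen : IsOpen U := by
    rw [Metric.isOpen_iff]
    rintro b ⟨hbD, γ, hγ⟩
    obtain ⟨ε, hε, hsub⟩ := Metric.isOpen_iff.mp hD b hbD
    refine ⟨ε, hε, fun b' hb' => ⟨hsub hb', ?_⟩⟩
    obtain ⟨γ', hγ', -⟩ := exists_concat hγ (isCurve_segment hsub hb')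
    exact ⟨γ', hγ'⟩
  have hVopen : IsOpen V := by
    rw [Metric.isOpen_iff]
    rintro b ⟨hbD, hbno⟩
    obtain ⟨ε, hε, hsub⟩ := Metric.isOpen_iff.mp hD b hbD
    refine ⟨ε, hε, fun b' hb' => ⟨hsub hb', ?_⟩⟩
    rintro ⟨γ, hγ⟩
    apply hbno
    obtain ⟨η, hη, -⟩ := exists_reverse (isCurve_segment hsub hb')
    obtain ⟨γ', hγ', -⟩ := exists_concat hγ hη
    exact ⟨γ', hγ'⟩
  have hsub : D ⊆ U ∪ V := by
    intro b hb
    by_cases h : ∃ γ : ℝ → Cn n, IsCurve D γ z b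
    · exact Or.inl ⟨hb, h⟩
    · exact Or.inr ⟨hb, h⟩
  have hUne : (D ∩ U).Nonempty := ⟨z, hz, hz, fun _ => z, isCurve_const hz⟩
  have hVne : (D ∩ V).Nonempty := ⟨w, hw, hw, fun h => hcon h⟩
  obtain ⟨x, -, hxU, hxV⟩ := hconn U V hUopen hVopen hsub hUne hVne
  exact hxV.2 hxU.2

lemma kobayashi_setNonempty (hD : IsOpen D) (hconn : IsPreconnected D)
    (hz : z ∈ D) (hw : w ∈ D) :
    {L : ℝ | ∃ γ : ℝ → Cn n, IsCurve D γ z w ∧ kobLength D γ = L}.Nonempty := by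
  obtain ⟨γ, hγ⟩ := exists_isCurve hD hconn hz hw
  exact ⟨kobLength D γ, γ, hγ, rfl⟩

/-- The crucial "triangle-type" inequality. -/
lemma kobayashi_triangle (hD : IsOpen D) (hconn : IsPreconnected D)
    (ha : v ∈ D) (hz : z ∈ D) (hw : w ∈ D) :
    kobayashi D z w ≤ kobayashi D v z + kobayashi D v w := by
  by_contra hcon
  push_neg at hcon
  set ε : ℝ := (kobayashi D z w - (kobayashi D v z + kobayashi D v w)) / 2 with hε
  have hεpos : 0 < ε := by simp only [hε]; linarith
  obtain ⟨L1, ⟨γ1, hγ1, hL1⟩, hL1lt⟩ := exists_lt_of_csInf_lt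
    (kobayashi_setNonempty hD hconn ha hz)
    (show kobayashi D v z < kobayashi D v z + ε by linarith)
  obtain ⟨L2, ⟨γ2, hγ2, hL2⟩, hL2lt⟩ := exists_lt_of_csInf_lt
    (kobayashi_setNonempty hD hconn ha hw)
    (show kobayashi D v w < kobayashi D v w + ε by linarith)
  obtain ⟨η, hη, hηlen⟩ := exists_reverse hγ1
  obtain ⟨γ, hγ, hγlen⟩ := exists_concat hη hγ2
  have h1 : kobayashi D z w ≤ kobLength D γ := kobayashi_le_kobLength hγ
  rw [← hL1] at hL1lt
  rw [← hL2] at hL2lt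
  have : kobayashi D z w < kobayashi D z w := by
    calc kobayashi D z w ≤ kobLength D γ := h1
      _ ≤ kobLength D η + kobLength D γ2 := hγlen
      _ = kobLength D γ1 + kobLength D γ2 := by rw [hηlen]
      _ < (kobayashi D v z + ε) + (kobayashi D v w + ε) := by linarith
      _ = kobayashi D z w := by simp only [hε]; ring
  exact lt_irrefl _ this

end Triangle

section Tanh

lemma tanh_eq_exp (x : ℝ) :
    Real.tanh x = (Real.exp x - Real.exp (-x)) / (Real.exp x + Real.exp (-x)) := by
  rw [Real.tanh_eq_sinh_div_cosh, Real.sinh_eq, Real.cosh_eq]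
  have h : Real.exp x + Real.exp (-x) ≠ 0 := by positivity
  field_simp

lemma tanh_le_one' (x : ℝ) : Real.tanh x ≤ 1 := by
  rw [tanh_eq_exp]
  have h1 := Real.exp_pos x
  have h2 := Real.exp_pos (-x)
  rw [div_le_one (by positivity)]
  linarith

lemma one_sub_exp_le_tanh {x : ℝ} (hx : 0 ≤ x) :
    1 - 2 * Real.exp (-(2 * x)) ≤ Real.tanh x := by
  rw [tanh_eq_exp]
  have h1 := Real.exp_pos x
  have h2 := Real.exp_pos (-x)
  have hAB : Real.exp x * Real.exp (-x) = 1 := by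
    rw [← Real.exp_add]; simp
  have hC : Real.exp (-(2 * x)) = Real.exp (-x) * Real.exp (-x) := by
    rw [← Real.exp_add]; ring_nf
  rw [hC, le_div_iff₀ (by positivity)]
  nlinarith [h2.le]

lemma exp_le_one_sub_tanh {x : ℝ} (hx : 0 ≤ x) :
    Real.exp (-(2 * x)) ≤ 1 - Real.tanh x := by
  rw [tanh_eq_exp]
  have h1 := Real.exp_pos x
  have h2 := Real.exp_pos (-x)
  have hAB : Real.exp x * Real.exp (-x) = 1 := by
    rw [← Real.exp_add]; simp
  have hC : Real.exp (-(2 * x)) = Real.exp (-x) * Real.exp (-x) := by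
    rw [← Real.exp_add]; ring_nf
  have hB1 : Real.exp (-x) ≤ 1 := by
    calc Real.exp (-x) ≤ Real.exp 0 := Real.exp_le_exp.mpr (by linarith)
      _ = 1 := Real.exp_zero
  have hrw : 1 - (Real.exp x - Real.exp (-x)) / (Real.exp x + Real.exp (-x))
      = 2 * Real.exp (-x) / (Real.exp x + Real.exp (-x)) := by
    field_simp
    ring
  rw [hC, hrw, le_div_iff₀ (by positivity)]
  nlinarith [h2.le]

end Tanh
/-- let `D ⊆ ℂⁿ` be a domain, `p₀ ∈ ∂D`, `a ∈ D`. Suppose there are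
points `z_j → p₀` in `D`, radii `r_j > 0`, and injective holomorphic maps
`f_j : 𝔹ₙ → D` with `B^k_D(z_j, r_j) ⊆ f_j(𝔹ₙ)`, with
`(1 - tanh r_j)/δ_D(z_j) → 0`. If moreover `2 k_D(a, z_j) ≤ -log δ_D(z_j) + c`
for some constant `c > 0` and all `j`, then `h^k_D(a) = 1`. -/
theorem fridman_eq_one_of_fast_squeezing {n : ℕ} (D : Set (Cn n)) (hD : IsOpen D)
    (hDconn : IsConnected D) (p₀ : Cn n) (hp₀ : p₀ ∈ frontier D)
    (a : Cn n) (ha : a ∈ D)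
    (zseq : ℕ → Cn n) (hzD : ∀ j, zseq j ∈ D)
    (hzlim : Filter.Tendsto zseq Filter.atTop (nhds p₀))
    (rseq : ℕ → ℝ) (hrpos : ∀ j, 0 < rseq j)
    (fseq : ℕ → Cn n → Cn n)
    (hfdiff : ∀ j, DifferentiableOn ℂ (fseq j) (ball 0 1))
    (hfinj : ∀ j, InjOn (fseq j) (ball 0 1))
    (hfmap : ∀ j, MapsTo (fseq j) (ball 0 1) D)
    (hfball : ∀ j, {w ∈ D | kobayashi D (zseq j) w < rseq j} ⊆ fseq j '' ball 0 1)
    (hfast : Filter.Tendsto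
      (fun j => (1 - Real.tanh (rseq j)) / Metric.infDist (zseq j) (frontier D))
      Filter.atTop (nhds 0))
    (c : ℝ) (hc : 0 < c)
    (hest : ∀ j, 2 * kobayashi D a (zseq j) ≤
      -Real.log (Metric.infDist (zseq j) (frontier D)) + c) :
    fridman (kobayashi D) D a = 1 := by

  have hconn := hDconn.isPreconnected
  have hδpos : ∀ j, 0 < infDist (zseq j) (frontier D) := by
    intro j
    refine (IsClosed.notMem_iff_infDist_pos isClosed_frontier ⟨p₀, hp₀⟩).mp ?_
    intro hmem
    rw [hD.frontier_eq] at hmem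
    exact hmem.2 (hzD j)
  have hexp : Filter.Tendsto
      (fun j => Real.exp (-(2 * rseq j) - Real.log (infDist (zseq j) (frontier D))))
      Filter.atTop (nhds 0) := by
    apply tendsto_of_tendsto_of_tendsto_of_le_of_le tendsto_const_nhds hfast
    · intro j
      dsimp only
      positivity
    · intro j
      dsimp only
      rw [Real.exp_sub, Real.exp_log (hδpos j)]
      gcongr
      · exact (hδpos j).le
      · exact exp_le_one_sub_tanh (hrpos j).le
  have hatBot : Filter.Tendsto (fun j => -(2 * rseq j) - Real.log (infDist (zseq j) (frontier D)))
      Filter.atTop Filter.atBot := Real.tendsto_exp_comp_nhds_zero.mp hexp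
  have hlim1 : Filter.Tendsto (fun j => rseq j + Real.log (infDist (zseq j) (frontier D)) / 2)
      Filter.atTop Filter.atTop := by
    have h1 : Filter.Tendsto (fun j => -(-(2 * rseq j) - Real.log (infDist (zseq j) (frontier D))))
        Filter.atTop Filter.atTop := Filter.tendsto_neg_atBot_atTop.comp hatBot
    have h2 := h1.atTop_div_const (show (0:ℝ) < 2 by norm_num)
    have h3 : (fun j => rseq j + Real.log (infDist (zseq j) (frontier D)) / 2)
        = fun j => -(-(2 * rseq j) - Real.log (infDist (zseq j) (frontier D))) / 2 := by
      funext j; ring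
    rw [h3]
    exact h2
  set K : ℕ → ℝ := fun j => kobayashi D a (zseq j) with hK
  set r' : ℕ → ℝ := fun j => rseq j - K j with hr'
  have hlow : ∀ j, rseq j + Real.log (infDist (zseq j) (frontier D)) / 2 + (-(c/2)) ≤ r' j := by
    intro j
    have h := hest j
    simp only [hr', hK] at *
    linarith
  have hlim2 : Filter.Tendsto r' Filter.atTop Filter.atTop :=
    Filter.tendsto_atTop_mono hlow (Filter.tendsto_atTop_add_const_right _ _ hlim1)
  set S : Set ℝ := insert (0:ℝ) {x : ℝ | ∃ r : ℝ, 0 ≤ r ∧ x = Real.tanh r ∧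
    ∃ g : Cn n → Cn n, DifferentiableOn ℂ g (ball 0 1) ∧ InjOn g (ball 0 1) ∧
      MapsTo g (ball 0 1) D ∧ {w ∈ D | kobayashi D a w < r} ⊆ g '' ball 0 1} with hS
  have hfrid : fridman (kobayashi D) D a = sSup S := rfl
  have hbdd : BddAbove S := by
    refine ⟨1, ?_⟩
    rintro x (rfl | ⟨r, hr0, rfl, -⟩)
    · norm_num
    · exact tanh_le_one' r
  have hmem : ∀ j, 0 ≤ r' j → Real.tanh (r' j) ∈ S := by
    intro j hj
    refine mem_insert_iff.mpr (Or.inr ?_)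
    refine ⟨r' j, hj, rfl, fseq j, hfdiff j, hfinj j, hfmap j, ?_⟩
    rintro x ⟨hxD, hxlt⟩
    apply hfball j
    refine ⟨hxD, ?_⟩
    have htri := kobayashi_triangle hD hconn ha (hzD j) hxD
    simp only [hr', hK] at hxlt htri ⊢
    linarith
  have hle1 : sSup S ≤ 1 := by
    apply csSup_le ⟨0, mem_insert _ _⟩
    rintro x (rfl | ⟨r, hr0, rfl, -⟩)
    · norm_num
    · exact tanh_le_one' r
  have hge1 : 1 ≤ sSup S := by
    have hev : ∀ᶠ j in Filter.atTop, Real.tanh (r' j) ≤ sSup S := by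
      filter_upwards [hlim2.eventually_ge_atTop 0] with j hj
      exact le_csSup hbdd (hmem j hj)
    have htends : Filter.Tendsto (fun j => Real.tanh (r' j)) Filter.atTop (nhds 1) := by
      have h1 : Filter.Tendsto (fun j => -(2 * r' j)) Filter.atTop Filter.atBot :=
        Filter.tendsto_neg_atTop_atBot.comp (hlim2.const_mul_atTop two_pos)
      have h2 : Filter.Tendsto (fun j => Real.exp (-(2 * r' j))) Filter.atTop (nhds 0) :=
        Real.tendsto_exp_atBot.comp h1
      have h3 := h2.const_mul (2:ℝ)
      have h4 := (tendsto_const_nhds (x := (1:ℝ)) (f := Filter.atTop)).sub h3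
      have hlow2 : Filter.Tendsto (fun j => 1 - 2 * Real.exp (-(2 * r' j)))
          Filter.atTop (nhds 1) := by simpa using h4
      apply tendsto_of_tendsto_of_tendsto_of_le_of_le' hlow2 tendsto_const_nhds
      · filter_upwards [hlim2.eventually_ge_atTop 0] with j hj
        exact one_sub_exp_le_tanh hj
      · exact Filter.Eventually.of_forall (fun j => tanh_le_one' _)
    exact le_of_tendsto htends hev
  rw [hfrid]
  exact le_antisymm hle1 hge1

end
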